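/- arXiv:2509.14743 — 4 statements merged into one kernel-verified Lean document; each statement's English description precedes it below -/
import Mathlib

section
/- Let D > 0, λ > 0, and let φ : [−D/2, D/2] → ℝ be a smooth even function with φ > 0 on (−D/2, D/2), φ(±D/2) = 0, satisfying −φ″(s) + s φ′(s) = λ φ(s) on (−D/2, D/2). Then φ″(s) < 0 for all s ∈ (−D/2, D/2); in particular φ is strictly concave on the interval. -/
open Real Set

theorem stmt6 (D lam : ℝ) (hD : 0 < D) (hlam : 0 < lam) (φ : ℝ → ℝ)
    (hs : ContDiffOn ℝ (⊤ : ℕ∞) φ (Icc (-(D/2)) (D/2)))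
    (heven : ∀ s ∈ Icc (-(D/2)) (D/2), φ (-s) = φ s)
    (hpos : ∀ s ∈ Ioo (-(D/2)) (D/2), 0 < φ s)
    (hb1 : φ (-(D/2)) = 0) (hb2 : φ (D/2) = 0)
    (heq : ∀ s ∈ Ioo (-(D/2)) (D/2),
      -(deriv (deriv φ) s) + s * deriv φ s = lam * φ s) :
    (∀ s ∈ Ioo (-(D/2)) (D/2), deriv (deriv φ) s < 0) ∧
      StrictConcaveOn ℝ (Icc (-(D/2)) (D/2)) φ := by
  set b := D / 2 with hbdef
  have hb : 0 < b := by positivity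
  have hsub : Ioo (-b) b ⊆ Icc (-b) b := Ioo_subset_Icc_self
  have hopen : IsOpen (Ioo (-b) b) := isOpen_Ioo
  -- smoothness on the open interval
  have hs' : ContDiffOn ℝ (⊤ : ℕ∞) φ (Ioo (-b) b) := hs.mono hsub
  have hd1 : ContDiffOn ℝ (⊤ : ℕ∞) (deriv φ) (Ioo (-b) b) :=
    hs'.deriv_of_isOpen hopen (m := (⊤ : ℕ∞)) (le_of_eq rfl)
  have hd2 : ContDiffOn ℝ (⊤ : ℕ∞) (deriv (deriv φ)) (Ioo (-b) b) :=
    hd1.deriv_of_isOpen hopen (m := (⊤ : ℕ∞)) (le_of_eq rfl)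
  have hcont2 : ContinuousOn (deriv (deriv φ)) (Ioo (-b) b) := hd2.continuousOn
  have hcont1 : ContinuousOn (deriv φ) (Ioo (-b) b) := hd1.continuousOn
  -- equation rewritten
  have hh : ∀ s ∈ Ioo (-b) b, deriv (deriv φ) s = s * deriv φ s - lam * φ s := by
    intro s hsx
    have := heq s hsx
    linarith
  -- deriv φ is odd on the interval
  have hodd : ∀ s ∈ Ioo (-b) b, deriv φ (-s) = -deriv φ s := by
    intro s hsx
    have hev : (fun t => φ (-t)) =ᶠ[nhds s] φ := by
      filter_upwards [hopen.mem_nhds hsx] with t ht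
      exact heven t (hsub ht)
    have h1 : deriv (fun t => φ (-t)) s = deriv φ s := hev.deriv_eq
    rw [deriv_comp_neg] at h1
    linarith
  have hzero : deriv φ 0 = 0 := by
    have := hodd 0 ⟨by linarith, hb⟩
    simp only [neg_zero] at this
    linarith
  -- second derivative is even on the interval
  have heven2 : ∀ s ∈ Ioo (-b) b, deriv (deriv φ) (-s) = deriv (deriv φ) s := by
    intro s hsx
    obtain ⟨h1, h2⟩ := hsx
    have hnx : -s ∈ Ioo (-b) b := ⟨by linarith, by linarith⟩
    rw [hh s ⟨h1, h2⟩, hh (-s) hnx, hodd s ⟨h1, h2⟩, heven s (hsub ⟨h1, h2⟩)]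
    ring
  -- key: second derivative negative for nonneg s
  have key : ∀ s ∈ Ioo (-b) b, 0 ≤ s → deriv (deriv φ) s < 0 := by
    intro s₀ hs₀ hs₀0
    by_contra hcon
    push_neg at hcon
    have hIsub : Icc 0 s₀ ⊆ Ioo (-b) b := fun t ht =>
      ⟨by linarith [ht.1], lt_of_le_of_lt ht.2 hs₀.2⟩
    -- set of points in [0, s₀] where the second derivative is ≥ 0
    set S : Set ℝ := Icc 0 s₀ ∩ (deriv (deriv φ)) ⁻¹' (Ici 0) with hSdef
    have hSne : S.Nonempty := ⟨s₀, ⟨hs₀0, le_refl _⟩, hcon⟩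
    have hSbdd : BddBelow S := ⟨0, fun t ht => ht.1.1⟩
    have hSclosed : IsClosed S :=
      (hcont2.mono hIsub).preimage_isClosed_of_isClosed isClosed_Icc isClosed_Ici
    set s₁ : ℝ := sInf S with hs₁def
    have hs₁mem : s₁ ∈ S := hSclosed.csInf_mem hSne hSbdd
    obtain ⟨⟨hs₁0, hs₁le⟩, hs₁h⟩ := hs₁mem
    have hs₁Ioo : s₁ ∈ Ioo (-b) b := hIsub ⟨hs₁0, hs₁le⟩
    -- s₁ > 0 since the second derivative is negative at 0
    have h0neg : deriv (deriv φ) 0 < 0 := by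
      have h0 : (0 : ℝ) ∈ Ioo (-b) b := ⟨by linarith, hb⟩
      rw [hh 0 h0, hzero]
      have := hpos 0 h0
      nlinarith
    have hs₁pos : 0 < s₁ := by
      rcases lt_or_eq_of_le hs₁0 with h | h
      · exact h
      · exfalso
        have hge : (0:ℝ) ≤ deriv (deriv φ) s₁ := hs₁h
        rw [← h] at hge
        linarith
    -- on [0, s₁), second derivative is negative
    have hneg : ∀ t, 0 ≤ t → t < s₁ → deriv (deriv φ) t < 0 := by
      intro t ht0 hts₁
      by_contra hc
      push_neg at hc
      have : t ∈ S := ⟨⟨ht0, le_trans (le_of_lt hts₁) hs₁le⟩, hc⟩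
      have := csInf_le hSbdd this
      linarith
    -- deriv φ is strictly decreasing on [0, s₁]
    have hanti : StrictAntiOn (deriv φ) (Icc 0 s₁) := by
      apply strictAntiOn_of_deriv_neg (convex_Icc 0 s₁)
      · exact hcont1.mono fun t ht => hIsub ⟨ht.1, le_trans ht.2 hs₁le⟩
      · intro x hx
        rw [interior_Icc] at hx
        exact hneg x (le_of_lt hx.1) hx.2
    have hlt : deriv φ s₁ < deriv φ 0 :=
      hanti ⟨le_refl 0, le_of_lt hs₁pos⟩ ⟨le_of_lt hs₁pos, le_refl s₁⟩ hs₁pos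
    rw [hzero] at hlt
    -- but the equation forces deriv φ s₁ > 0
    have hφpos : 0 < φ s₁ := hpos s₁ hs₁Ioo
    have heq1 := hh s₁ hs₁Ioo
    have hge : (0:ℝ) ≤ deriv (deriv φ) s₁ := hs₁h
    nlinarith [mul_pos hs₁pos (neg_pos.mpr hlt), mul_pos hlam hφpos]
  have main : ∀ s ∈ Ioo (-b) b, deriv (deriv φ) s < 0 := by
    intro s hsx
    rcases le_or_gt 0 s with h | h
    · exact key s hsx h
    · obtain ⟨h1, h2⟩ := hsx
      have hnx : -s ∈ Ioo (-b) b := ⟨by linarith, by linarith⟩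
      have := heven2 (-s) hnx
      rw [neg_neg] at this
      rw [this]
      exact key (-s) hnx (by linarith)
  refine ⟨main, ?_⟩
  apply strictConcaveOn_of_deriv2_neg (convex_Icc _ _) hs.continuousOn
  intro x hx
  rw [interior_Icc] at hx
  exact main x hx
end

section
/- Let D > 0, λ > 0, and let φ : [−D/2, D/2] → ℝ be a smooth even function with φ > 0 on (−D/2, D/2), φ(±D/2) = 0, satisfying −φ″(s) + s φ′(s) = λ φ(s) on (−D/2, D/2). Then φ′(s) < 0 for all s ∈ (0, D/2); in particular −(log φ)′(s) > 0 for all s ∈ (0, D/2). -/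
open Real Set

theorem stmt7 (D lam : ℝ) (hD : 0 < D) (hlam : 0 < lam) (φ : ℝ → ℝ)
    (hs : ContDiffOn ℝ (⊤ : ℕ∞) φ (Icc (-(D/2)) (D/2)))
    (heven : ∀ s ∈ Icc (-(D/2)) (D/2), φ (-s) = φ s)
    (hpos : ∀ s ∈ Ioo (-(D/2)) (D/2), 0 < φ s)
    (hb1 : φ (-(D/2)) = 0) (hb2 : φ (D/2) = 0)
    (heq : ∀ s ∈ Ioo (-(D/2)) (D/2),
      -(deriv (deriv φ) s) + s * deriv φ s = lam * φ s) :
    ∀ s ∈ Ioo 0 (D/2), deriv φ s < 0 ∧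
      0 < -(deriv (fun t => Real.log (φ t)) s) := by
  have ha0 : 0 < D / 2 := by linarith
  set I : Set ℝ := Ioo (-(D/2)) (D/2) with hIdef
  have hIopen : IsOpen I := isOpen_Ioo
  have hφI : ContDiffOn ℝ (⊤ : ℕ∞) φ I := hs.mono Ioo_subset_Icc_self
  have hφdiff : ∀ x ∈ I, DifferentiableAt ℝ φ x := fun x hx =>
    (hφI.differentiableOn (by simp)).differentiableAt (hIopen.mem_nhds hx)
  have hdI : ContDiffOn ℝ (⊤ : ℕ∞) (deriv φ) I :=
    hφI.deriv_of_isOpen hIopen (by exact_mod_cast le_top)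
  have hddiff : ∀ x ∈ I, DifferentiableAt ℝ (deriv φ) x := fun x hx =>
    (hdI.differentiableOn (by simp)).differentiableAt (hIopen.mem_nhds hx)
  -- deriv φ 0 = 0
  have h0I : (0 : ℝ) ∈ I := ⟨by linarith, ha0⟩
  have heq0 : (fun s => φ (-s)) =ᶠ[nhds (0 : ℝ)] φ := by
    filter_upwards [Ioo_mem_nhds (show -(D/2) < (0:ℝ) by linarith) ha0] with x hx
    exact heven x (Ioo_subset_Icc_self hx)
  have hd0 : deriv φ 0 = 0 := by
    have h1 : deriv (fun s => φ (-s)) 0 = deriv φ 0 := heq0.deriv_eq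
    rw [deriv_comp_neg, neg_zero] at h1
    linarith
  -- the function g
  set g : ℝ → ℝ := fun t => deriv φ t * Real.exp (-(t^2/2)) with hgdef
  have hg : ∀ x ∈ I, HasDerivAt g (-(lam * φ x) * Real.exp (-(x^2/2))) x := by
    intro x hx
    have h1 : HasDerivAt (deriv φ) (deriv (deriv φ) x) x :=
      (hddiff x hx).hasDerivAt
    have h2 : HasDerivAt (fun t : ℝ => -(t^2/2)) (-x) x := by
      have := ((hasDerivAt_pow 2 x).div_const 2).fun_neg
      simpa using this
    have h3 : HasDerivAt (fun t : ℝ => Real.exp (-(t^2/2)))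
        (Real.exp (-(x^2/2)) * (-x)) x := h2.exp
    have h4 := h1.fun_mul h3
    have hxx : deriv (deriv φ) x = x * deriv φ x - lam * φ x := by
      have := heq x hx; linarith
    refine h4.congr_deriv ?_
    rw [hxx]; ring
  -- main claim
  intro s hsIoo
  obtain ⟨hs0, hsD⟩ := hsIoo
  have hsub : Icc (0:ℝ) s ⊆ I := fun x hx => ⟨by linarith [hx.1], by linarith [hx.2]⟩
  have hanti : StrictAntiOn g (Icc 0 s) := by
    apply strictAntiOn_of_deriv_neg (convex_Icc 0 s)
    · intro x hx
      exact ((hg x (hsub hx)).differentiableAt.continuousAt).continuousWithinAt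
    · intro x hx
      rw [interior_Icc] at hx
      have hxI : x ∈ I := hsub (Ioo_subset_Icc_self hx)
      rw [(hg x hxI).deriv]
      apply mul_neg_of_neg_of_pos
      · have := hpos x hxI; nlinarith
      · exact Real.exp_pos _
  have hgs : g s < g 0 :=
    hanti (left_mem_Icc.2 hs0.le) (right_mem_Icc.2 hs0.le) hs0
  have hg0 : g 0 = 0 := by simp [hgdef, hd0]
  have hgs' : deriv φ s * Real.exp (-(s^2/2)) < 0 := by
    rw [hg0] at hgs; exact hgs
  have hsI : s ∈ I := ⟨by linarith, hsD⟩
  have hde : deriv φ s < 0 := by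
    nlinarith [Real.exp_pos (-(s^2/2))]
  refine ⟨hde, ?_⟩
  have hφs : 0 < φ s := hpos s hsI
  have hlog : HasDerivAt (fun t => Real.log (φ t)) (deriv φ s / φ s) s :=
    (hφdiff s hsI).hasDerivAt.log (ne_of_gt hφs)
  rw [hlog.deriv]
  have : deriv φ s / φ s < 0 := div_neg_of_neg_of_pos hde hφs
  linarith
end

section
/- Let D > 0. Let φ̄₁ be smooth, even, positive on (−D/2, D/2), vanishing at ±D/2, with −φ̄₁″ + s φ̄₁′ = λ̄₁(D) φ̄₁, and let φ̄₂ be smooth, odd, vanishing at ±D/2, positive on (0, D/2), with −φ̄₂″ + s φ̄₂′ = λ̄₂(D) φ̄₂, where λ̄₁(D) < λ̄₂(D). Then the quotient φ̄₂/φ̄₁ is strictly increasing on (−D/2, D/2); in particular its derivative is positive at every point of (−D/2, 0) ∪ (0, D/2). -/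
open MeasureTheory Real Set
open scoped RealInnerProductSpace

noncomputable def gaussMeasure (n : ℕ) : Measure (EuclideanSpace ℝ (Fin n)) :=
  volume.withDensity fun x => ENNReal.ofReal ((2 * π) ^ (-(n : ℝ) / 2) * Real.exp (-‖x‖ ^ 2 / 2))

def IsTestFun {E : Type*} [NormedAddCommGroup E] [NormedSpace ℝ E]
    (Ω : Set E) (v : E → ℝ) : Prop :=
  ContDiff ℝ (⊤ : ℕ∞) v ∧ HasCompactSupport v ∧ tsupport v ⊆ Ω

noncomputable def minmaxEig {E : Type*} [NormedAddCommGroup E] [NormedSpace ℝ E]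
    (R : (E → ℝ) → ℝ) (Ω : Set E) (i : ℕ) : ℝ :=
  sInf { t | ∃ b : Fin i → (E → ℝ), LinearIndependent ℝ b ∧ (∀ j, IsTestFun Ω (b j)) ∧
    t = sSup { r | ∃ v ∈ Submodule.span ℝ (Set.range b), v ≠ 0 ∧ r = R v } }

noncomputable def ouEig (n : ℕ) (Ω : Set (EuclideanSpace ℝ (Fin n))) (i : ℕ) : ℝ :=
  minmaxEig (fun v =>
    (∫ x in Ω, ‖gradient v x‖ ^ 2 ∂gaussMeasure n) /
      (∫ x in Ω, (v x) ^ 2 ∂gaussMeasure n)) Ω i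

noncomputable def gauss1 : Measure ℝ :=
  volume.withDensity fun s => ENNReal.ofReal ((2 * π) ^ (-(1 : ℝ) / 2) * Real.exp (-s ^ 2 / 2))

noncomputable def modelEig (D : ℝ) (i : ℕ) : ℝ :=
  minmaxEig (fun v =>
    (∫ s in Ioo (-(D/2)) (D/2), (deriv v s) ^ 2 ∂gauss1) /
      (∫ s in Ioo (-(D/2)) (D/2), (v s) ^ 2 ∂gauss1)) (Ioo (-(D/2)) (D/2)) i

lemma aux_deriv2 {φ : ℝ → ℝ} {a x : ℝ} (hφ : ContDiffOn ℝ (⊤ : ℕ∞) φ (Set.Icc (-a) a))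
    (hx : x ∈ Set.Ioo (-a) a) :
    HasDerivAt φ (deriv φ x) x ∧ HasDerivAt (deriv φ) (deriv (deriv φ) x) x := by
  have hmem : Set.Icc (-a) a ∈ nhds x := Icc_mem_nhds hx.1 hx.2
  have hca : ContDiffAt ℝ (⊤ : ℕ∞) φ x := hφ.contDiffAt hmem
  obtain ⟨u, hu, hcu⟩ := hca.contDiffOn (m := 2) (by exact WithTop.coe_le_coe.mpr le_top) (by simp)
  have hxo : x ∈ interior u := mem_interior_iff_mem_nhds.2 hu
  have hci : ContDiffOn ℝ 2 φ (interior u) := hcu.mono interior_subset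
  have hd1 : ContDiffOn ℝ 1 (deriv φ) (interior u) :=
    hci.deriv_of_isOpen isOpen_interior (by norm_num)
  constructor
  · exact ((hci.differentiableOn (by norm_num)).differentiableAt
      (isOpen_interior.mem_nhds hxo)).hasDerivAt
  · exact ((hd1.differentiableOn (by norm_num)).differentiableAt
      (isOpen_interior.mem_nhds hxo)).hasDerivAt

theorem stmt11 (D : ℝ) (hD : 0 < D) (φ₁ φ₂ : ℝ → ℝ)
    (hgap : modelEig D 1 < modelEig D 2)
    (hφ₁s : ContDiffOn ℝ (⊤ : ℕ∞) φ₁ (Icc (-(D/2)) (D/2)))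
    (hφ₁even : ∀ s ∈ Icc (-(D/2)) (D/2), φ₁ (-s) = φ₁ s)
    (hφ₁pos : ∀ s ∈ Ioo (-(D/2)) (D/2), 0 < φ₁ s)
    (hφ₁0 : φ₁ (-(D/2)) = 0 ∧ φ₁ (D/2) = 0)
    (hφ₁eq : ∀ s ∈ Ioo (-(D/2)) (D/2),
      -(deriv (deriv φ₁) s) + s * deriv φ₁ s = modelEig D 1 * φ₁ s)
    (hφ₂s : ContDiffOn ℝ (⊤ : ℕ∞) φ₂ (Icc (-(D/2)) (D/2)))
    (hφ₂odd : ∀ s ∈ Icc (-(D/2)) (D/2), φ₂ (-s) = -φ₂ s)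
    (hφ₂pos : ∀ s ∈ Ioo 0 (D/2), 0 < φ₂ s)
    (hφ₂0 : φ₂ (-(D/2)) = 0 ∧ φ₂ (D/2) = 0)
    (hφ₂eq : ∀ s ∈ Ioo (-(D/2)) (D/2),
      -(deriv (deriv φ₂) s) + s * deriv φ₂ s = modelEig D 2 * φ₂ s) :
    StrictMonoOn (fun s => φ₂ s / φ₁ s) (Ioo (-(D/2)) (D/2)) ∧
      ∀ s ∈ Ioo (-(D/2)) 0 ∪ Ioo 0 (D/2),
        0 < deriv (fun t => φ₂ t / φ₁ t) s := by
  have ha : 0 < D / 2 := by linarith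
  set a := D / 2 with ha'
  set lam1 := modelEig D 1
  set lam2 := modelEig D 2
  -- Wronskian-type quantity
  set W : ℝ → ℝ := fun s => deriv φ₂ s * φ₁ s - φ₂ s * deriv φ₁ s with hWdef
  set G : ℝ → ℝ := fun s => Real.exp (-s^2/2) *
    (derivWithin φ₂ (Icc (-a) a) s * φ₁ s - φ₂ s * derivWithin φ₁ (Icc (-a) a) s) with hGdef
  have hnhds : ∀ x ∈ Ioo (-a) a, Icc (-a) a ∈ nhds x := fun x hx => Icc_mem_nhds hx.1 hx.2
  have hGW : ∀ x ∈ Ioo (-a) a, G x = Real.exp (-x^2/2) * W x := by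
    intro x hx
    simp only [hGdef, hWdef, derivWithin_of_mem_nhds (hnhds x hx)]
  -- sign of φ₂ on the left
  have hφ₂neg : ∀ x ∈ Ioo (-a) 0, φ₂ x < 0 := by
    intro x hx
    have hmx : -x ∈ Ioo 0 a := ⟨by linarith [hx.2], by linarith [hx.1]⟩
    have h1 : φ₂ (-(-x)) = -φ₂ (-x) := hφ₂odd (-x) ⟨by linarith [hmx.1, ha], hmx.2.le⟩
    rw [neg_neg] at h1
    have := hφ₂pos (-x) hmx
    linarith
  -- derivative of G
  have hGderiv : ∀ x ∈ Ioo (-a) a,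
      HasDerivAt G ((lam1 - lam2) * (Real.exp (-x^2/2) * (φ₁ x * φ₂ x))) x := by
    intro x hx
    obtain ⟨hd11, hd21⟩ := aux_deriv2 hφ₁s hx
    obtain ⟨hd12, hd22⟩ := aux_deriv2 hφ₂s hx
    have hexp : HasDerivAt (fun s : ℝ => Real.exp (-s^2/2)) (Real.exp (-x^2/2) * (-x)) x := by
      have h0 : HasDerivAt (fun s : ℝ => -s^2/2) (-x) x := by
        have := ((hasDerivAt_pow 2 x).neg).div_const 2
        refine this.congr_deriv ?_
        ring
      exact h0.exp
    have hWd : HasDerivAt W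
        ((deriv (deriv φ₂) x * φ₁ x + deriv φ₂ x * deriv φ₁ x) -
         (deriv φ₂ x * deriv φ₁ x + φ₂ x * deriv (deriv φ₁) x)) x :=
      (hd22.mul hd11).sub (hd12.mul hd21)
    have hg : HasDerivAt (fun s => Real.exp (-s^2/2) * W s)
        ((lam1 - lam2) * (Real.exp (-x^2/2) * (φ₁ x * φ₂ x))) x := by
      have := hexp.mul hWd
      refine this.congr_deriv ?_
      have e1 : deriv (deriv φ₁) x = x * deriv φ₁ x - lam1 * φ₁ x := by
        have := hφ₁eq x hx; linarith
      have e2 : deriv (deriv φ₂) x = x * deriv φ₂ x - lam2 * φ₂ x := by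
        have := hφ₂eq x hx; linarith
      rw [e1, e2, hWdef]
      ring
    apply hg.congr_of_eventuallyEq
    filter_upwards [isOpen_Ioo.mem_nhds hx] with y hy
    exact hGW y hy
  -- continuity of G on the closed interval
  have hone : (1 : WithTop ℕ∞) ≤ ((⊤ : ℕ∞) : WithTop ℕ∞) := WithTop.coe_le_coe.mpr le_top
  have hud : UniqueDiffOn ℝ (Icc (-a) a) := uniqueDiffOn_Icc (by linarith)
  have hGc : ContinuousOn G (Icc (-a) a) := by
    apply ContinuousOn.mul (((continuous_pow 2).neg.div_const 2).rexp.continuousOn)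
    exact ((hφ₂s.continuousOn_derivWithin hud hone).mul hφ₁s.continuousOn).sub
      (hφ₂s.continuousOn.mul (hφ₁s.continuousOn_derivWithin hud hone))
  have hGl : G (-a) = 0 := by simp [hGdef, hφ₁0.1, hφ₂0.1]
  have hGr : G a = 0 := by simp [hGdef, hφ₁0.2, hφ₂0.2]
  -- G strictly increasing on [-a,0]
  have hmono : StrictMonoOn G (Icc (-a) 0) := by
    apply strictMonoOn_of_deriv_pos (convex_Icc _ _)
      (hGc.mono (Icc_subset_Icc le_rfl ha.le))
    intro x hx
    rw [interior_Icc] at hx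
    have hxI : x ∈ Ioo (-a) a := ⟨hx.1, by linarith [hx.2]⟩
    rw [(hGderiv x hxI).deriv]
    exact mul_pos_of_neg_of_neg (by linarith)
      (mul_neg_of_pos_of_neg (Real.exp_pos _) (mul_neg_of_pos_of_neg (hφ₁pos x hxI) (hφ₂neg x hx)))
  -- G strictly decreasing on [0,a]
  have hanti : StrictAntiOn G (Icc 0 a) := by
    apply strictAntiOn_of_deriv_neg (convex_Icc _ _)
      (hGc.mono (Icc_subset_Icc (by linarith) le_rfl))
    intro x hx
    rw [interior_Icc] at hx
    have hxI : x ∈ Ioo (-a) a := ⟨by linarith [hx.1], hx.2⟩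
    rw [(hGderiv x hxI).deriv]
    exact mul_neg_of_neg_of_pos (by linarith)
      (mul_pos (Real.exp_pos _) (mul_pos (hφ₁pos x hxI) (hφ₂pos x hx)))
  have hGpos : ∀ x ∈ Ioo (-a) a, 0 < G x := by
    intro x hx
    rcases le_or_gt x 0 with hle | hlt
    · have := hmono (left_mem_Icc.2 (by linarith)) ⟨hx.1.le, hle⟩ hx.1
      rwa [hGl] at this
    · have := hanti ⟨hlt.le, hx.2.le⟩ (right_mem_Icc.2 (by linarith)) hx.2
      rwa [hGr] at this
  have hWpos : ∀ x ∈ Ioo (-a) a, 0 < W x := by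
    intro x hx
    have h1 := hGpos x hx
    rw [hGW x hx] at h1
    have h3 := Real.exp_pos (-x^2/2)
    rcases lt_or_ge 0 (W x) with h | h
    · exact h
    · have := mul_nonpos_of_nonneg_of_nonpos h3.le h
      linarith
  -- derivative of the quotient
  have hq : ∀ x ∈ Ioo (-a) a,
      HasDerivAt (fun t => φ₂ t / φ₁ t) (W x / (φ₁ x)^2) x := by
    intro x hx
    exact ((aux_deriv2 hφ₂s hx).1).div ((aux_deriv2 hφ₁s hx).1) (hφ₁pos x hx).ne'
  have hdpos : ∀ x ∈ Ioo (-a) a, 0 < deriv (fun t => φ₂ t / φ₁ t) x := by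
    intro x hx
    rw [(hq x hx).deriv]
    exact div_pos (hWpos x hx) (pow_pos (hφ₁pos x hx) 2)
  constructor
  · apply strictMonoOn_of_deriv_pos (convex_Ioo _ _)
      (fun x hx => ((hq x hx).continuousAt).continuousWithinAt)
    intro x hx
    rw [interior_Ioo] at hx
    exact hdpos x hx
  · intro s hs
    rcases hs with hs | hs
    · exact hdpos s ⟨hs.1, by linarith [hs.2]⟩
    · exact hdpos s ⟨by linarith [hs.1], hs.2⟩
end

section
/- Let D > 0. Let φ̄₁ be smooth, even, positive on (−D/2, D/2), vanishing at ±D/2, with −φ̄₁″ + s φ̄₁′ = λ̄₁(D) φ̄₁, and let φ̄₂ be smooth, odd, vanishing at ±D/2, positive on (0, D/2), with −φ̄₂″ + s φ̄₂′ = λ̄₂(D) φ̄₂, where λ̄₁(D) < λ̄₂(D). Assume moreover that ∫_{−D/2}^{D/2} φ̄₁² dμ₁ = ∫_{−D/2}^{D/2} φ̄₂² dμ₁. Then there exists b ∈ (0, D/2) such that φ̄₁(s)² > φ̄₂(s)² for all s ∈ (0, b) and φ̄₁(s)² < φ̄₂(s)² for all s ∈ (b, D/2). -/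
open MeasureTheory Real Set
open scoped RealInnerProductSpace

set_option maxHeartbeats 1000000 in
theorem stmt12 (D : ℝ) (hD : 0 < D) (φ₁ φ₂ : ℝ → ℝ)
    (hgap : modelEig D 1 < modelEig D 2)
    (hφ₁s : ContDiffOn ℝ (⊤ : ℕ∞) φ₁ (Icc (-(D/2)) (D/2)))
    (hφ₁even : ∀ s ∈ Icc (-(D/2)) (D/2), φ₁ (-s) = φ₁ s)
    (hφ₁pos : ∀ s ∈ Ioo (-(D/2)) (D/2), 0 < φ₁ s)
    (hφ₁0 : φ₁ (-(D/2)) = 0 ∧ φ₁ (D/2) = 0)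
    (hφ₁eq : ∀ s ∈ Ioo (-(D/2)) (D/2),
      -(deriv (deriv φ₁) s) + s * deriv φ₁ s = modelEig D 1 * φ₁ s)
    (hφ₂s : ContDiffOn ℝ (⊤ : ℕ∞) φ₂ (Icc (-(D/2)) (D/2)))
    (hφ₂odd : ∀ s ∈ Icc (-(D/2)) (D/2), φ₂ (-s) = -φ₂ s)
    (hφ₂pos : ∀ s ∈ Ioo 0 (D/2), 0 < φ₂ s)
    (hφ₂0 : φ₂ (-(D/2)) = 0 ∧ φ₂ (D/2) = 0)
    (hφ₂eq : ∀ s ∈ Ioo (-(D/2)) (D/2),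
      -(deriv (deriv φ₂) s) + s * deriv φ₂ s = modelEig D 2 * φ₂ s)
    (hnorm : ∫ s in Ioo (-(D/2)) (D/2), (φ₁ s) ^ 2 ∂gauss1 =
      ∫ s in Ioo (-(D/2)) (D/2), (φ₂ s) ^ 2 ∂gauss1) :
    ∃ b ∈ Ioo 0 (D/2),
      (∀ s ∈ Ioo 0 b, (φ₂ s) ^ 2 < (φ₁ s) ^ 2) ∧
      (∀ s ∈ Ioo b (D/2), (φ₁ s) ^ 2 < (φ₂ s) ^ 2) := by
  set a := D / 2 with ha'
  set lam1 := modelEig D 1 with hl1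
  set lam2 := modelEig D 2 with hl2
  have ha : 0 < a := by positivity
  have haa : -a < a := by linarith
  have h0mem : (0:ℝ) ∈ Icc (-a) a := ⟨by linarith, le_of_lt ha⟩
  have hφ₂00 : φ₂ 0 = 0 := by
    have h := hφ₂odd 0 h0mem; rw [neg_zero] at h; linarith
  have hφ₁0pos : 0 < φ₁ 0 := hφ₁pos 0 ⟨by linarith, ha⟩
  have hsub : Ioo (-a) a ⊆ Icc (-a) a := Ioo_subset_Icc_self
  have hJn : ∀ x ∈ Ioo (-a) a, Icc (-a) a ∈ nhds x := fun x hx => Icc_mem_nhds hx.1 hx.2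
  have hC1 : ContinuousOn φ₁ (Icc (-a) a) := hφ₁s.continuousOn
  have hC2 : ContinuousOn φ₂ (Icc (-a) a) := hφ₂s.continuousOn
  have hud : UniqueDiffOn ℝ (Icc (-a) a) := uniqueDiffOn_Icc haa
  set ψ₁ := derivWithin φ₁ (Icc (-a) a) with hψ₁d
  set ψ₂ := derivWithin φ₂ (Icc (-a) a) with hψ₂d
  have hψ₁c : ContinuousOn ψ₁ (Icc (-a) a) :=
    hφ₁s.continuousOn_derivWithin hud (by exact_mod_cast le_top)
  have hψ₂c : ContinuousOn ψ₂ (Icc (-a) a) :=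
    hφ₂s.continuousOn_derivWithin hud (by exact_mod_cast le_top)
  have hψ₁eq : ∀ x ∈ Ioo (-a) a, ψ₁ x = deriv φ₁ x :=
    fun x hx => derivWithin_of_mem_nhds (hJn x hx)
  have hψ₂eq : ∀ x ∈ Ioo (-a) a, ψ₂ x = deriv φ₂ x :=
    fun x hx => derivWithin_of_mem_nhds (hJn x hx)
  have hs1 : ContDiffOn ℝ (⊤ : ℕ∞) φ₁ (Ioo (-a) a) := hφ₁s.mono hsub
  have hs2 : ContDiffOn ℝ (⊤ : ℕ∞) φ₂ (Ioo (-a) a) := hφ₂s.mono hsub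
  have hd1 : ContDiffOn ℝ (⊤ : ℕ∞) (deriv φ₁) (Ioo (-a) a) :=
    hs1.deriv_of_isOpen isOpen_Ioo (by exact_mod_cast le_top)
  have hd2 : ContDiffOn ℝ (⊤ : ℕ∞) (deriv φ₂) (Ioo (-a) a) :=
    hs2.deriv_of_isOpen isOpen_Ioo (by exact_mod_cast le_top)
  have hder1 : ∀ x ∈ Ioo (-a) a, HasDerivAt φ₁ (deriv φ₁ x) x := fun x hx =>
    ((hs1.contDiffAt (isOpen_Ioo.mem_nhds hx)).differentiableAt
      (by simp)).hasDerivAt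
  have hder2 : ∀ x ∈ Ioo (-a) a, HasDerivAt φ₂ (deriv φ₂ x) x := fun x hx =>
    ((hs2.contDiffAt (isOpen_Ioo.mem_nhds hx)).differentiableAt
      (by simp)).hasDerivAt
  have hder1' : ∀ x ∈ Ioo (-a) a, HasDerivAt (deriv φ₁) (deriv (deriv φ₁) x) x := fun x hx =>
    ((hd1.contDiffAt (isOpen_Ioo.mem_nhds hx)).differentiableAt
      (by simp)).hasDerivAt
  have hder2' : ∀ x ∈ Ioo (-a) a, HasDerivAt (deriv φ₂) (deriv (deriv φ₂) x) x := fun x hx =>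
    ((hd2.contDiffAt (isOpen_Ioo.mem_nhds hx)).differentiableAt
      (by simp)).hasDerivAt
  have hdd1 : ∀ x ∈ Ioo (-a) a, deriv (deriv φ₁) x = x * deriv φ₁ x - lam1 * φ₁ x := by
    intro x hx; have h := hφ₁eq x hx; linarith
  have hdd2 : ∀ x ∈ Ioo (-a) a, deriv (deriv φ₂) x = x * deriv φ₂ x - lam2 * φ₂ x := by
    intro x hx; have h := hφ₂eq x hx; linarith
  set g : ℝ → ℝ := fun s => Real.exp (-s^2/2) * (ψ₂ s * φ₁ s - ψ₁ s * φ₂ s) with hgdef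
  have hgc : ContinuousOn g (Icc (-a) a) := by
    apply ContinuousOn.mul
    · exact (Real.continuous_exp.comp ((continuous_pow 2).neg.div_const 2)).continuousOn
    · exact (hψ₂c.mul hC1).sub (hψ₁c.mul hC2)
  have hgderiv : ∀ x ∈ Ioo (-a) a,
      HasDerivAt g (Real.exp (-x^2/2) * ((lam1 - lam2) * (φ₁ x * φ₂ x))) x := by
    intro x hx
    have hEx : HasDerivAt (fun s : ℝ => Real.exp (-s^2/2)) (Real.exp (-x^2/2) * (-x)) x := by
      have h1 : HasDerivAt (fun s : ℝ => -s^2/2) (-x) x := by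
        have h2 := ((hasDerivAt_pow 2 x).neg.div_const 2)
        refine h2.congr_deriv ?_
        simp; ring
      exact h1.exp
    have hW1 : HasDerivAt (fun s => deriv φ₂ s * φ₁ s - deriv φ₁ s * φ₂ s)
        ((deriv (deriv φ₂) x * φ₁ x + deriv φ₂ x * deriv φ₁ x)
          - (deriv (deriv φ₁) x * φ₂ x + deriv φ₁ x * deriv φ₂ x)) x :=
      ((hder2' x hx).mul (hder1 x hx)).sub ((hder1' x hx).mul (hder2 x hx))
    have hh := hEx.mul hW1
    have hgx : g =ᶠ[nhds x]
        fun s => Real.exp (-s^2/2) * (deriv φ₂ s * φ₁ s - deriv φ₁ s * φ₂ s) := by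
      filter_upwards [isOpen_Ioo.mem_nhds hx] with y hy
      rw [hgdef]; simp only [hψ₁eq y hy, hψ₂eq y hy]
    rw [hgx.hasDerivAt_iff]
    refine hh.congr_deriv ?_
    rw [hdd1 x hx, hdd2 x hx]
    ring
  have hga : g a = 0 := by
    simp [hgdef, hφ₁0.2, hφ₂0.2]
  have hanti : StrictAntiOn g (Icc 0 a) := by
    apply strictAntiOn_of_deriv_neg (convex_Icc 0 a)
      (hgc.mono (Icc_subset_Icc (by linarith) le_rfl))
    intro x hx
    rw [interior_Icc] at hx
    have hx' : x ∈ Ioo (-a) a := ⟨by linarith [hx.1], hx.2⟩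
    rw [(hgderiv x hx').deriv]
    have h1 := hφ₁pos x hx'
    have h2 := hφ₂pos x hx
    have he := Real.exp_pos (-x^2/2)
    have hl : lam1 < lam2 := hgap
    have hm : 0 < φ₁ x * φ₂ x := mul_pos h1 h2
    have hneg : (lam1 - lam2) * (φ₁ x * φ₂ x) < 0 := mul_neg_of_neg_of_pos (by linarith) hm
    exact mul_neg_of_pos_of_neg he hneg
  have hWpos : ∀ x ∈ Ioo 0 a, 0 < deriv φ₂ x * φ₁ x - deriv φ₁ x * φ₂ x := by
    intro x hx
    have hx' : x ∈ Ioo (-a) a := ⟨by linarith [hx.1], hx.2⟩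
    have h1 : g a < g x :=
      hanti ⟨le_of_lt hx.1, le_of_lt hx.2⟩ ⟨le_of_lt ha, le_rfl⟩ hx.2
    rw [hga] at h1
    have he := Real.exp_pos (-x^2/2)
    have h2 : 0 < ψ₂ x * φ₁ x - ψ₁ x * φ₂ x := by
      by_contra hcon
      push_neg at hcon
      have := mul_nonpos_of_nonneg_of_nonpos he.le hcon
      rw [hgdef] at h1
      simp only at h1
      linarith
    rw [hψ₁eq x hx', hψ₂eq x hx'] at h2
    exact h2
  set q : ℝ → ℝ := fun s => φ₂ s / φ₁ s with hqdef
  have hqmono : StrictMonoOn q (Ioo 0 a) := by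
    apply strictMonoOn_of_deriv_pos (convex_Ioo 0 a)
    · apply ContinuousOn.div
      · exact hC2.mono (fun x hx => hsub ⟨by linarith [hx.1], hx.2⟩)
      · exact hC1.mono (fun x hx => hsub ⟨by linarith [hx.1], hx.2⟩)
      · exact fun x hx => ne_of_gt (hφ₁pos x ⟨by linarith [hx.1], hx.2⟩)
    · intro x hx
      rw [isOpen_Ioo.interior_eq] at hx
      have hx' : x ∈ Ioo (-a) a := ⟨by linarith [hx.1], hx.2⟩
      have hdq : HasDerivAt q
          ((deriv φ₂ x * φ₁ x - φ₂ x * deriv φ₁ x) / φ₁ x ^ 2) x :=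
        (hder2 x hx').div (hder1 x hx') (ne_of_gt (hφ₁pos x hx'))
      rw [hdq.deriv]
      apply div_pos _ (pow_pos (hφ₁pos x hx') 2)
      have := hWpos x hx
      nlinarith
  -- existence of a point where φ₁ ≤ φ₂
  have hJm : MeasurableSet (Ioo (-a) a) := measurableSet_Ioo
  have hex : ∃ s₀ ∈ Ioo 0 a, φ₁ s₀ ≤ φ₂ s₀ := by
    by_contra hcon
    push_neg at hcon
    have key : ∀ s ∈ Ioo (-a) a, φ₂ s ^ 2 < φ₁ s ^ 2 := by
      intro s hs
      rcases lt_trichotomy s 0 with h | h | h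
      · have hns : -s ∈ Ioo 0 a := ⟨by linarith, by linarith [hs.1]⟩
        have h1 := hcon (-s) hns
        have h2 := hφ₂pos (-s) hns
        have e1 : φ₁ (-s) = φ₁ s := hφ₁even s (hsub hs)
        have e2 : φ₂ (-s) = -φ₂ s := hφ₂odd s (hsub hs)
        nlinarith
      · subst h; rw [hφ₂00]; nlinarith [hφ₁0pos]
      · have hs' : s ∈ Ioo 0 a := ⟨h, hs.2⟩
        have h1 := hcon s hs'
        have h2 := hφ₂pos s hs'
        nlinarith
    -- integrability
    obtain ⟨M₁, hM₁⟩ := isCompact_Icc.exists_bound_of_continuousOn hC1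
    obtain ⟨M₂, hM₂⟩ := isCompact_Icc.exists_bound_of_continuousOn hC2
    have hfin : gauss1 (Ioo (-a) a) < ⊤ := by
      rw [gauss1, withDensity_apply _ hJm]
      calc ∫⁻ s in Ioo (-a) a,
            ENNReal.ofReal ((2*π) ^ (-(1:ℝ)/2) * Real.exp (-s^2/2)) ∂volume
          ≤ ∫⁻ _ in Ioo (-a) a, ENNReal.ofReal ((2*π) ^ (-(1:ℝ)/2)) ∂volume := by
            apply lintegral_mono
            intro s
            apply ENNReal.ofReal_le_ofReal
            have h1 : Real.exp (-s^2/2) ≤ 1 := Real.exp_le_one_iff.mpr (by nlinarith [sq_nonneg s])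
            have h2 : (0:ℝ) < (2*π) ^ (-(1:ℝ)/2) :=
              Real.rpow_pos_of_pos (by positivity) _
            nlinarith
        _ = ENNReal.ofReal ((2*π) ^ (-(1:ℝ)/2)) * volume (Ioo (-a) a) :=
            setLIntegral_const _ _
        _ < ⊤ := ENNReal.mul_lt_top ENNReal.ofReal_lt_top
            (by rw [Real.volume_Ioo]; exact ENNReal.ofReal_lt_top)
    haveI hfm : IsFiniteMeasure (gauss1.restrict (Ioo (-a) a)) :=
      ⟨by rwa [Measure.restrict_apply_univ]⟩
    have hmk : ∀ (φ : ℝ → ℝ) (M : ℝ), ContinuousOn φ (Icc (-a) a) →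
        (∀ x ∈ Icc (-a) a, ‖φ x‖ ≤ M) →
        IntegrableOn (fun s => φ s ^ 2) (Ioo (-a) a) gauss1 := by
      intro φ M hc hM
      have hmeas : AEStronglyMeasurable (fun s => φ s ^ 2)
          (gauss1.restrict (Ioo (-a) a)) :=
        ((hc.mono hsub).pow 2).aestronglyMeasurable hJm
      refine Integrable.mono' (integrable_const (M^2)) hmeas ?_
      refine (ae_restrict_iff' hJm).mpr (ae_of_all _ fun s hs => ?_)
      have h1 := hM s (hsub hs)
      rw [Real.norm_eq_abs] at h1 ⊢
      rw [abs_of_nonneg (sq_nonneg _)]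
      nlinarith [abs_nonneg (φ s), sq_abs (φ s)]
    have hint1 := hmk φ₁ M₁ hC1 hM₁
    have hint2 := hmk φ₂ M₂ hC2 hM₂
    have hdiffint : IntegrableOn (fun s => φ₁ s ^ 2 - φ₂ s ^ 2) (Ioo (-a) a) gauss1 :=
      hint1.sub hint2
    have hmeaspos : 0 < gauss1 (Ioo (-a) a) := by
      rw [gauss1, withDensity_apply _ hJm]
      have hc : (0:ℝ) < (2*π) ^ (-(1:ℝ)/2) * Real.exp (-a^2/2) := by
        have := Real.rpow_pos_of_pos (show (0:ℝ) < 2*π by positivity) (-(1:ℝ)/2)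
        positivity
      calc (0:ENNReal)
          < ENNReal.ofReal ((2*π) ^ (-(1:ℝ)/2) * Real.exp (-a^2/2)) * volume (Ioo (-a) a) := by
            apply ENNReal.mul_pos
            · exact ne_of_gt (ENNReal.ofReal_pos.mpr hc)
            · rw [Real.volume_Ioo]
              exact ne_of_gt (ENNReal.ofReal_pos.mpr (by linarith))
        _ = ∫⁻ _ in Ioo (-a) a,
              ENNReal.ofReal ((2*π) ^ (-(1:ℝ)/2) * Real.exp (-a^2/2)) ∂volume :=
            (setLIntegral_const _ _).symm
        _ ≤ ∫⁻ s in Ioo (-a) a,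
              ENNReal.ofReal ((2*π) ^ (-(1:ℝ)/2) * Real.exp (-s^2/2)) ∂volume := by
            apply setLIntegral_mono
            · exact ((continuous_const.mul
                (Real.continuous_exp.comp ((continuous_pow 2).neg.div_const 2))).measurable).ennreal_ofReal
            · intro x hx
              apply ENNReal.ofReal_le_ofReal
              have h1 : Real.exp (-a^2/2) ≤ Real.exp (-x^2/2) := by
                apply Real.exp_le_exp.mpr
                nlinarith [hx.1, hx.2]
              have h2 : (0:ℝ) < (2*π) ^ (-(1:ℝ)/2) :=
                Real.rpow_pos_of_pos (by positivity) _
              nlinarith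
    have h0 : 0 < ∫ s in Ioo (-a) a, (φ₁ s ^ 2 - φ₂ s ^ 2) ∂gauss1 := by
      rw [setIntegral_pos_iff_support_of_nonneg_ae ?_ hdiffint]
      · have hsup : Ioo (-a) a ⊆ Function.support (fun s => φ₁ s ^ 2 - φ₂ s ^ 2) :=
          fun s hs => ne_of_gt (sub_pos.mpr (key s hs))
        rwa [Set.inter_eq_right.mpr hsup]
      · exact (ae_restrict_iff' hJm).mpr
          (ae_of_all _ fun s hs => le_of_lt (sub_pos.mpr (key s hs)))
    rw [integral_sub hint1 hint2, hnorm] at h0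
    linarith
  obtain ⟨s₀, hs₀, hs₀le⟩ := hex
  -- find s₁ ∈ (0, s₀) with φ₂ s₁ < φ₁ s₁
  have hcont0 : ContinuousWithinAt (fun s => φ₁ s - φ₂ s) (Icc (-a) a) 0 :=
    (hC1.sub hC2) 0 h0mem
  have hpos0 : (0:ℝ) < φ₁ 0 - φ₂ 0 := by rw [hφ₂00]; linarith
  haveI hF : (nhdsWithin (0:ℝ) (Ioo 0 s₀)).NeBot := by
    rw [nhdsWithin_Ioo_eq_nhdsGT hs₀.1]; infer_instance
  have hev1 : ∀ᶠ s in nhdsWithin (0:ℝ) (Ioo 0 s₀), 0 < φ₁ s - φ₂ s := by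
    have h1 := hcont0.eventually (eventually_gt_nhds hpos0)
    have hmono : nhdsWithin (0:ℝ) (Ioo 0 s₀) ≤ nhdsWithin (0:ℝ) (Icc (-a) a) := by
      apply nhdsWithin_mono
      intro x hx
      exact ⟨by linarith [hx.1], le_of_lt (lt_of_lt_of_le hx.2 hs₀.2.le)⟩
    exact h1.filter_mono hmono
  obtain ⟨s₁, hs₁d, hs₁mem⟩ := (hev1.and eventually_mem_nhdsWithin).exists
  -- IVT for φ₁ - φ₂ on [s₁, s₀]
  have hs₁s₀ : s₁ ≤ s₀ := le_of_lt hs₁mem.2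
  have hIccsub : Icc s₁ s₀ ⊆ Icc (-a) a :=
    Icc_subset_Icc (by linarith [hs₁mem.1]) hs₀.2.le
  have hcI : ContinuousOn (fun s => φ₁ s - φ₂ s) (Icc s₁ s₀) :=
    (hC1.sub hC2).mono hIccsub
  have hmem0 : (0:ℝ) ∈ Icc (φ₁ s₀ - φ₂ s₀) (φ₁ s₁ - φ₂ s₁) :=
    ⟨by linarith, le_of_lt hs₁d⟩
  obtain ⟨b, hbmem, hb0⟩ := intermediate_value_Icc' hs₁s₀ hcI hmem0
  have hbJ : b ∈ Ioo 0 a :=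
    ⟨lt_of_lt_of_le hs₁mem.1 hbmem.1, lt_of_le_of_lt hbmem.2 hs₀.2⟩
  have hbeq : φ₁ b = φ₂ b := by
    have h := hb0; simp only at h; linarith
  have hqb : q b = 1 := by
    rw [hqdef]; simp only
    rw [← hbeq]
    exact div_self (ne_of_gt (hφ₁pos b ⟨by linarith [hbJ.1], hbJ.2⟩))
  refine ⟨b, hbJ, ?_, ?_⟩
  · intro s hs
    have hsJ : s ∈ Ioo 0 a := ⟨hs.1, hs.2.trans hbJ.2⟩
    have hφ₁sp := hφ₁pos s ⟨by linarith [hsJ.1], hsJ.2⟩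
    have hqlt : q s < q b := hqmono hsJ hbJ hs.2
    rw [hqb, hqdef] at hqlt
    simp only at hqlt
    rw [div_lt_one hφ₁sp] at hqlt
    exact pow_lt_pow_left₀ hqlt (hφ₂pos s hsJ).le two_ne_zero
  · intro s hs
    have hsJ : s ∈ Ioo 0 a := ⟨lt_trans hbJ.1 hs.1, hs.2⟩
    have hφ₁sp := hφ₁pos s ⟨by linarith [hsJ.1], hsJ.2⟩
    have hqlt : q b < q s := hqmono hbJ hsJ hs.1
    rw [hqb, hqdef] at hqlt
    simp only at hqlt
    rw [one_lt_div hφ₁sp] at hqlt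
    exact pow_lt_pow_left₀ hqlt hφ₁sp.le two_ne_zero
end
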